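/- For all formulas φ₁, φ₂, φ₃ of lexicographic logic and every truth assignment I, ⟦(φ₁ ∨ φ₂) ≫ φ₃⟧(I) = ⟦(φ₁ ≫ φ₃) ∨ (φ₂ ≫ φ₃)⟧(I). -/

import Mathlib

/-!
Every truth value is a word of the prefix grammar `W ::= F | T | 0 W W`, and these words form a
prefix code (unique readability of Polish notation). So if `u < v` lexicographically, `u` is not a
proper prefix of `v` and the first difference survives appending: `u ++ w < v ++ w`. Together with
`[F]` and `[T]` being the least and greatest truth values, this makes `· ≫ w` strictly increasing,
and a strictly increasing map commutes with `max`.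
-/

/-- The three truth symbols F, 0 (Z), T. -/
inductive TSym : Type
  | F | Z | T
deriving DecidableEq

open TSym

/-- The operation u ≫ v on lists of symbols. -/
def lexOp (u v : List TSym) : List TSym :=
  if u = [F] ∧ v = [F] then [F]
  else if u = [T] ∧ v = [T] then [T]
  else Z :: (u ++ v)

/-- The truth domain 𝕍 as an inductive predicate. -/
inductive Vmem : List TSym → Prop
  | F : Vmem [F]
  | T : Vmem [T]
  | op {u v : List TSym} : Vmem u → Vmem v → Vmem (lexOp u v)

def symRank : TSym → ℕ
  | F => 0 | Z => 1 | T => 2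

/-- The order F < 0 < T on symbols. -/
def symLt (a b : TSym) : Prop := symRank a < symRank b

/-- Lexicographic order on lists induced by F < 0 < T. -/
def listLt (u v : List TSym) : Prop := List.Lex symLt u v

/-- Pointwise negation F ↦ T, T ↦ F, 0 ↦ 0. -/
def symNeg : TSym → TSym
  | F => T | T => F | Z => Z

def negList (v : List TSym) : List TSym := v.map symNeg

def symVal : TSym → ℚ
  | F => -1 | Z => 0 | T => 1

/-- val([u₁,…,u_n]) = Σ symVal(u_i) · (1/3)^(i-1). -/
def val : List TSym → ℚ
  | [] => 0
  | a :: t => symVal a + val t / 3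

open Classical in
/-- Lexicographic minimum. -/
noncomputable def minL (u v : List TSym) : List TSym := if listLt u v then u else v

open Classical in
/-- Lexicographic maximum. -/
noncomputable def maxL (u v : List TSym) : List TSym := if listLt u v then v else u

/-- Formulas of lexicographic logic. -/
inductive Formula (α : Type) : Type
  | atom : α → Formula α
  | and : Formula α → Formula α → Formula α
  | or : Formula α → Formula α → Formula α
  | neg : Formula α → Formula α
  | lex : Formula α → Formula α → Formula α

/-- Semantics of lexicographic logic. -/
noncomputable def eval {α : Type} (I : α → List TSym) : Formula α → List TSym
  | Formula.atom a => I a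
  | Formula.and φ ψ => minL (eval I φ) (eval I ψ)
  | Formula.or φ ψ => maxL (eval I φ) (eval I ψ)
  | Formula.neg φ => negList (eval I φ)
  | Formula.lex φ ψ => lexOp (eval I φ) (eval I ψ)

instance : Std.Asymm symLt := ⟨fun _ _ => Nat.lt_asymm⟩

instance : Std.Trichotomous symLt :=
  ⟨fun a b => by cases a <;> cases b <;> simp [symLt, symRank]⟩

theorem listLt_irrefl (u : List TSym) : ¬ listLt u u :=
  List.lex_irrefl (fun a => Nat.lt_irrefl (symRank a)) u

theorem listLt_asymm {u v : List TSym} (h : listLt u v) : ¬ listLt v u :=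
  Std.Asymm.asymm (r := List.Lex symLt) u v h

theorem listLt_trichotomy (u v : List TSym) : listLt u v ∨ u = v ∨ listLt v u :=
  trichotomous_of (List.Lex symLt) u v

theorem map_maxL {f : List TSym → List TSym} {u v : List TSym}
    (huv : listLt u v → listLt (f u) (f v)) (hvu : listLt v u → listLt (f v) (f u)) :
    f (maxL u v) = maxL (f u) (f v) := by
  rcases listLt_trichotomy u v with h | rfl | h
  · simp only [maxL, if_pos h, if_pos (huv h)]
  · simp [maxL]
  · simp only [maxL, if_neg (listLt_asymm h), if_neg (listLt_asymm (hvu h))]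

theorem List.Lex.append_of_not_prefix {α : Type*} {r : α → α → Prop} {u v : List α}
    (h : List.Lex r u v) (hp : ¬ u <+: v) (w w' : List α) : List.Lex r (u ++ w) (v ++ w') := by
  induction h with
  | nil => exact absurd List.nil_prefix hp
  | cons _ ih => exact .cons (ih fun h => hp (List.cons_prefix_cons.mpr ⟨rfl, h⟩))
  | rel h => exact .rel h

inductive LexWord : List TSym → Prop
  | F : LexWord [F]
  | T : LexWord [T]
  | node {u v : List TSym} : LexWord u → LexWord v → LexWord (Z :: (u ++ v))

namespace LexWord

theorem lexOp {u v : List TSym} (hu : LexWord u) (hv : LexWord v) : LexWord (lexOp u v) := by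
  unfold _root_.lexOp
  split_ifs
  exacts [.F, .T, .node hu hv]

theorem negList {u : List TSym} (hu : LexWord u) : LexWord (negList u) := by
  induction hu with
  | F => exact .T
  | T => exact .F
  | node _ _ iha ihb =>
    simpa [_root_.negList, symNeg] using iha.node ihb

theorem eq_of_append_eq {u v s t : List TSym} (hu : LexWord u) (hv : LexWord v)
    (h : u ++ s = v ++ t) : u = v := by
  induction hu generalizing v s t with
  | F => cases hv <;> simp_all
  | T => cases hv <;> simp_all
  | node _ _ iha ihb =>
    cases hv with
    | F | T => simp at h
    | node hc hd =>
      simp only [List.cons_append, List.cons.injEq, List.append_assoc, true_and] at h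
      obtain rfl := iha hc h
      obtain rfl := ihb hd (List.append_cancel_left h)
      rfl

theorem eq_of_prefix {u v : List TSym} (hu : LexWord u) (hv : LexWord v) (h : u <+: v) :
    u = v := by
  obtain ⟨t, ht⟩ := h
  exact hu.eq_of_append_eq hv (s := t) (t := []) (by simpa using ht)

theorem not_lt_F {u : List TSym} (hu : LexWord u) : ¬ listLt u [TSym.F] := by
  cases hu <;> simp [listLt, List.cons_lex_cons_iff, symLt, symRank]

theorem not_T_lt {u : List TSym} (hu : LexWord u) : ¬ listLt [TSym.T] u := by
  cases hu <;> simp [listLt, List.cons_lex_cons_iff, symLt, symRank]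

end LexWord

theorem Vmem.lexWord {u : List TSym} (hu : Vmem u) : LexWord u := by
  induction hu with
  | F => exact .F
  | T => exact .T
  | op _ _ iha ihb => exact iha.lexOp ihb

theorem lexWord_eval {α : Type} {I : α → List TSym} (hI : ∀ a, LexWord (I a)) :
    ∀ φ : Formula α, LexWord (eval I φ)
  | .atom a => hI a
  | .and φ ψ => by
    simp only [eval, minL]; split_ifs <;> apply lexWord_eval hI
  | .or φ ψ => by
    simp only [eval, maxL]; split_ifs <;> apply lexWord_eval hI
  | .neg φ => (lexWord_eval hI φ).negList
  | .lex φ ψ => (lexWord_eval hI φ).lexOp (lexWord_eval hI ψ)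

theorem lexOp_lt_lexOp_left {u v w : List TSym} (hu : LexWord u) (hv : LexWord v)
    (h : listLt u v) : listLt (lexOp u w) (lexOp v w) := by
  have hu_ne_T : u ≠ [T] := by rintro rfl; exact hv.not_T_lt h
  have hv_ne_F : v ≠ [F] := by rintro rfl; exact hu.not_lt_F h
  have h_not_prefix : ¬ u <+: v := fun hp => listLt_irrefl v (hu.eq_of_prefix hv hp ▸ h)
  simp only [lexOp, hu_ne_T, hv_ne_F, false_and, if_false]
  split_ifs with hu_F hv_T
  · exact absurd (hu_F.2.symm.trans hv_T.2) (by decide)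
  · exact .rel (show symLt F Z from Nat.zero_lt_one)
  · exact .rel (show symLt Z T from Nat.one_lt_two)
  · exact .cons (h.append_of_not_prefix h_not_prefix w w)

theorem or_lex_distrib {α : Type} (φ₁ φ₂ φ₃ : Formula α) (I : α → List TSym)
    (hI : ∀ a, Vmem (I a)) :
    eval I (Formula.lex (Formula.or φ₁ φ₂) φ₃) =
      eval I (Formula.or (Formula.lex φ₁ φ₃) (Formula.lex φ₂ φ₃)) := by
  have hword := lexWord_eval fun a => (hI a).lexWord
  simp only [eval]
  exact map_maxL (f := (lexOp · (eval I φ₃)))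
    (lexOp_lt_lexOp_left (hword φ₁) (hword φ₂)) (lexOp_lt_lexOp_left (hword φ₂) (hword φ₁))
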